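/- arXiv:2409.18900 — 3 statements merged into one kernel-verified Lean document; each statement's English description precedes it below -/
import Mathlib

section
/- Let f ∈ 𝒮(ℝ²) (a Schwartz function) have zero mean over every circle centered at the origin. Then ∫_{ℝ²} f̂ χ = 0 for every radial χ ∈ 𝒮(ℝ²), and consequently the Fourier transform f̂ also has zero mean over every circle centered at the origin, i.e. ∫₀^{2π} f̂(ρ cos β, ρ sin β) dβ = 0 for every ρ > 0. -/
noncomputable section

open MeasureTheory Real Filter Topology Set

namespace SQG

/-- We identify the plane `ℝ²` with `ℝ × ℝ`. -/
abbrev Plane : Type := ℝ × ℝ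

/-- The Euclidean norm on the plane. -/
def en (x : Plane) : ℝ := Real.sqrt (x.1 ^ 2 + x.2 ^ 2)

/-- Counterclockwise rotation by the angle `φ`. -/
def rot (φ : ℝ) (x : Plane) : Plane :=
  (Real.cos φ * x.1 - Real.sin φ * x.2, Real.sin φ * x.1 + Real.cos φ * x.2)

/-- Rotation by 90 degrees: `(a,b)^⊥ = (-b,a)`. -/
def perp (x : Plane) : Plane := (-x.2, x.1)

/-- The open ball of radius `r` centered at the origin (Euclidean norm). -/
def ball2 (r : ℝ) : Set Plane := {x | en x < r}

/-- Euclidean dot product on the plane. -/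
def dot (a b : Plane) : ℝ := a.1 * b.1 + a.2 * b.2

/-- `P`-fold symmetry. -/
def PFoldSymmetric {α : Type*} (P : ℕ) (f : Plane → α) : Prop :=
  ∀ x, f (rot (2 * π / P) x) = f x

/-- Odd-odd symmetry. -/
def OddOdd (f : Plane → ℝ) : Prop :=
  (∀ x : Plane, f (-x.1, x.2) = -f x) ∧ (∀ x : Plane, f (x.1, -x.2) = -f x)

/-- The gradient of a scalar function. -/
def grad (f : Plane → ℝ) (x : Plane) : Plane :=
  (fderiv ℝ f x (1, 0), fderiv ℝ f x (0, 1))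

/-- First order partial derivatives. -/
def pd (i : Fin 2) (f : Plane → ℝ) : Plane → ℝ :=
  fun x => fderiv ℝ f x (if i = 0 then (1, 0) else (0, 1))

/-- The iterated partial derivative `∂₁^a ∂₂^b f`. -/
def pdm (a b : ℕ) (f : Plane → ℝ) : Plane → ℝ := (pd 0)^[a] ((pd 1)^[b] f)

/-- Supremum of the absolute value. -/
def supAbs (f : Plane → ℝ) : ℝ := ⨆ x : Plane, |f x|

/-- The `C^k` norm: `∑_{|γ| ≤ k} sup |D^γ f|`. -/
def cknorm (k : ℕ) (f : Plane → ℝ) : ℝ :=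
  ∑ a ∈ Finset.range (k + 1), ∑ b ∈ Finset.range (k + 1 - a), supAbs (pdm a b f)

/-- The `α`-Hölder seminorm. -/
def holderSemi (α : ℝ) (f : Plane → ℝ) : ℝ :=
  ⨆ p : Plane × Plane, |f p.1 - f p.2| / en (p.1 - p.2) ^ α

/-- The `C^{k,α}` norm (with the top order Hölder seminorms summed). -/
def ckanorm (k : ℕ) (α : ℝ) (f : Plane → ℝ) : ℝ :=
  cknorm k f + ∑ a ∈ Finset.range (k + 1), holderSemi α (pdm a (k - a) f)

/-- The `C^k` norm of a vector field. -/
def cknormV (k : ℕ) (u : Plane → Plane) : ℝ :=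
  cknorm k (fun x => (u x).1) + cknorm k (fun x => (u x).2)

/-- The `C^{k,α}` norm of a vector field. -/
def ckanormV (k : ℕ) (α : ℝ) (u : Plane → Plane) : ℝ :=
  ckanorm k α (fun x => (u x).1) + ckanorm k α (fun x => (u x).2)

/-- The Fourier transform `f̂(ξ) = ∫ f(x) e^{-2πi x·ξ} dx`. -/
def ft (f : Plane → ℝ) (ξ : Plane) : ℂ :=
  ∫ x : Plane, Complex.exp (((-2) * π * dot x ξ : ℝ) * Complex.I) * (f x : ℂ)

/-- The Sobolev weight `(1+|ξ|²)^s |f̂(ξ)|²`. -/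
def sobWeight (s : ℝ) (f : Plane → ℝ) (ξ : Plane) : ℝ :=
  (1 + en ξ ^ 2) ^ s * ‖ft f ξ‖ ^ 2

/-- Membership in the Sobolev space `H^s(ℝ²)`. -/
def MemSob (s : ℝ) (f : Plane → ℝ) : Prop := Integrable (sobWeight s f)

/-- The `H^s(ℝ²)` norm. -/
def sobNorm (s : ℝ) (f : Plane → ℝ) : ℝ := (∫ ξ : Plane, sobWeight s f ξ) ^ ((1:ℝ)/2)

/-- The truncated Biot–Savart integral. -/
def bsTrunc (θ : Plane → ℝ) (ε : ℝ) (x : Plane) : Plane :=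
  (Real.Gamma (3/2) / π ^ ((3:ℝ)/2)) •
    ∫ y in {y : Plane | ε < en (x - y)}, (θ y / en (x - y) ^ 3) • perp (x - y)

/-- `u` is the principal value Biot–Savart velocity `v[θ]` of `θ`. -/
def IsBSVelocity (θ : Plane → ℝ) (u : Plane → Plane) : Prop :=
  ∀ x : Plane, Filter.Tendsto (fun ε => bsTrunc θ ε x) (𝓝[>] (0:ℝ)) (𝓝 (u x))

/-- `(θ, u)` solves the SQG equation on the time interval `[0,T]`:
`u` is the Biot–Savart velocity of `θ` and `∂ₜθ + u·∇θ = 0`. -/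
def SolvesSQGOn (T : ℝ) (θ : ℝ → Plane → ℝ) (u : ℝ → Plane → Plane) : Prop :=
  (∀ t ∈ Set.Icc (0:ℝ) T, IsBSVelocity (θ t) (u t)) ∧
  (∀ t ∈ Set.Icc (0:ℝ) T, ∀ x : Plane,
    derivWithin (fun s => θ s x) (Set.Icc 0 T) t + dot (u t x) (grad (θ t) x) = 0)

/-- Smoothness on `ℝ² × [0,T]`. -/
def SmoothOn2 (T : ℝ) (θ : ℝ → Plane → ℝ) : Prop :=
  ContDiffOn ℝ (⊤ : ℕ∞) (fun p : Plane × ℝ => θ p.2 p.1)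
    ((Set.univ : Set Plane) ×ˢ Set.Icc (0:ℝ) T)

/-- A classical solution of SQG on `[0,T]`: continuous and differentiable on
`ℝ² × [0,T]`, in `L^∞([0,T];H^{1+α})` for some `α > 0`, solving SQG pointwise. -/
def IsClassicalSolution (T : ℝ) (θ : ℝ → Plane → ℝ) (u : ℝ → Plane → Plane) : Prop :=
  ContinuousOn (fun p : Plane × ℝ => θ p.2 p.1)
      ((Set.univ : Set Plane) ×ˢ Set.Icc (0:ℝ) T) ∧
  (∀ (x : Plane), ∀ t ∈ Set.Icc (0:ℝ) T,
    DifferentiableWithinAt ℝ (fun p : Plane × ℝ => θ p.2 p.1)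
      ((Set.univ : Set Plane) ×ˢ Set.Icc (0:ℝ) T) (x, t)) ∧
  (∃ α > (0:ℝ), ∃ M : ℝ, ∀ t ∈ Set.Icc (0:ℝ) T,
    MemSob (1 + α) (θ t) ∧ sobNorm (1 + α) (θ t) ≤ M) ∧
  SolvesSQGOn T θ u

/-- Zero mean over every circle centered at the origin. -/
def ZeroCircleMeans {E : Type*} [NormedAddCommGroup E] [NormedSpace ℝ E]
    (f : Plane → E) : Prop :=
  ∀ r > (0:ℝ), (∫ α in (0:ℝ)..(2 * π), f (r * Real.cos α, r * Real.sin α)) = 0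

/-- The oscillatory background profile `ω̄`. -/
def omegaBar (s K lam N : ℝ) (g : Plane → ℝ) (x : Plane) : ℝ :=
  K⁻¹ * lam ^ (1 - s) * N ^ (-s) * g (lam • x) *
    Real.sin (lam * N * x.1) * Real.sin (lam * N * x.2)

/-- The pseudovelocity `v̄[ω̄]`. -/
def vBar (s K lam N : ℝ) (g : Plane → ℝ) (x : Plane) : Plane :=
  (g (lam • x) / (Real.sqrt 2 * K * lam ^ (s - 1) * N ^ s)) •
    ((-(Real.sin (lam * N * x.1) * Real.cos (lam * N * x.2)),
      Real.cos (lam * N * x.1) * Real.sin (lam * N * x.2)) : Plane)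

end SQG

namespace SQG

/-!
Both claims pair `f̂` with a rotation-invariant weight: `χ`, resp. the uniform measure on the
circle of radius `ρ`. By Fubini this pairing equals `∫ f g`, where `g` is the Fourier transform
of the weight, again rotation invariant and hence constant on circles. So `f g` has zero circle
means, and integrating it in polar coordinates gives `0`.
-/

lemma en_rot (φ : ℝ) (x : Plane) : en (rot φ x) = en x := by
  unfold en rot
  congr 1
  linear_combination (x.1 ^ 2 + x.2 ^ 2) * Real.sin_sq_add_cos_sq φ

lemma dot_rot (φ : ℝ) (x y : Plane) : dot (rot φ x) (rot φ y) = dot x y := by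
  unfold dot rot
  linear_combination (x.1 * y.1 + x.2 * y.2) * Real.sin_sq_add_cos_sq φ

lemma dot_rot_left (φ : ℝ) (x y : Plane) : dot (rot φ x) y = dot x (rot (-φ) y) := by
  simp only [dot, rot, Real.cos_neg, Real.sin_neg]
  ring

lemma rot_mk_zero (φ r : ℝ) : rot φ (r, 0) = (r * Real.cos φ, r * Real.sin φ) := by
  simp [rot, mul_comm]

lemma rot_polar (φ r β : ℝ) :
    rot φ (r * Real.cos β, r * Real.sin β) = (r * Real.cos (β + φ), r * Real.sin (β + φ)) := by
  simp only [rot, Real.cos_add, Real.sin_add]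
  ext <;> ring

/-- `rot φ` is multiplication by `exp (φ i)` under the identification `ℂ ≃ ℝ × ℝ`. -/
def rotEquiv (φ : ℝ) : Plane ≃ᵐ Plane :=
  (Complex.measurableEquivRealProd.symm.trans
    (rotation (Circle.exp φ)).toHomeomorph.toMeasurableEquiv).trans
    Complex.measurableEquivRealProd

lemma coe_rotEquiv (φ : ℝ) : ⇑(rotEquiv φ) = rot φ := by
  funext x
  change Complex.measurableEquivRealProd
    (rotation (Circle.exp φ) (Complex.measurableEquivRealProd.symm x)) = rot φ x
  simp [Complex.measurableEquivRealProd_symm_apply, Complex.exp_mul_I, rot, Complex.cos_ofReal_re,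
    Complex.sin_ofReal_re, add_comm]

lemma measurePreserving_rotEquiv (φ : ℝ) :
    MeasurePreserving (rotEquiv φ) (volume : Measure Plane) volume :=
  Complex.volume_preserving_equiv_real_prod.comp
    ((rotation (Circle.exp φ)).measurePreserving.comp
      Complex.volume_preserving_equiv_real_prod.symm)

lemma integral_comp_rot {E : Type*} [NormedAddCommGroup E] [NormedSpace ℝ E]
    (φ : ℝ) (F : Plane → E) : ∫ x : Plane, F (rot φ x) = ∫ x : Plane, F x := by
  rw [← coe_rotEquiv]
  exact (measurePreserving_rotEquiv φ).integral_comp' F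

section CircleMeans

variable {E : Type*} [NormedAddCommGroup E] [NormedSpace ℝ E]

lemma integral_Ioo_polar_eq_zero {F : Plane → E} (hF : ZeroCircleMeans F) {r : ℝ} (hr : 0 < r) :
    ∫ θ in Ioo (-π) π, F (r * Real.cos θ, r * Real.sin θ) = 0 := by
  have hper : Function.Periodic (fun θ => F (r * Real.cos θ, r * Real.sin θ)) (2 * π) :=
    fun θ => by simp only [Real.cos_add_two_pi, Real.sin_add_two_pi]
  have hshift := hper.intervalIntegral_add_eq (-π) 0
  rw [show -π + 2 * π = π by ring, zero_add] at hshift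
  rw [← integral_Ioc_eq_integral_Ioo, ← intervalIntegral.integral_of_le (by linarith [pi_pos]),
    hshift]
  exact hF r hr

/-- In polar coordinates the integral is an integral of circle means; if `F` is not integrable
both sides vanish by convention. -/
theorem integral_eq_zero_of_zeroCircleMeans {F : Plane → E} (hF : ZeroCircleMeans F) :
    ∫ x, F x = 0 := by
  rw [← integral_comp_polarCoord_symm, polarCoord_target]
  by_cases hint : IntegrableOn (fun p : ℝ × ℝ => p.1 • F (polarCoord.symm p))
    (Ioi 0 ×ˢ Ioo (-π) π) (volume.prod volume)
  · rw [Measure.volume_eq_prod, setIntegral_prod _ hint]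
    refine setIntegral_eq_zero_of_forall_eq_zero fun r hr => ?_
    simp only [polarCoord_symm_apply]
    rw [integral_smul, integral_Ioo_polar_eq_zero hF hr, smul_zero]
  · rw [Measure.volume_eq_prod]
    exact integral_undef hint

variable [CompleteSpace E]

theorem ZeroCircleMeans.smul_of_rot_invariant {f : Plane → ℝ} (hf : ZeroCircleMeans f)
    {g : Plane → E} (hg : ∀ φ x, g (rot φ x) = g x) : ZeroCircleMeans fun x => f x • g x := by
  intro r hr
  have hcircle (α : ℝ) : g (r * Real.cos α, r * Real.sin α) = g (r, 0) := by
    rw [← rot_mk_zero, hg]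
  simp only [hcircle]
  rw [intervalIntegral.integral_smul_const, hf r hr, zero_smul]

end CircleMeans

def fourierKernel (x ξ : Plane) : ℂ := Complex.exp (((-2) * π * dot x ξ : ℝ) * Complex.I)

lemma norm_fourierKernel (x ξ : Plane) : ‖fourierKernel x ξ‖ = 1 :=
  Complex.norm_exp_ofReal_mul_I _

lemma continuous_fourierKernel : Continuous fun p : Plane × Plane => fourierKernel p.1 p.2 := by
  unfold fourierKernel dot
  fun_prop

lemma fourierKernel_rot (φ : ℝ) (x ξ : Plane) :
    fourierKernel (rot φ x) (rot φ ξ) = fourierKernel x ξ := by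
  rw [fourierKernel, dot_rot, fourierKernel]

lemma fourierKernel_rot_left (φ : ℝ) (x ξ : Plane) :
    fourierKernel (rot φ x) ξ = fourierKernel x (rot (-φ) ξ) := by
  rw [fourierKernel, dot_rot_left, fourierKernel]

/-- Fubini's theorem; `c` and `w` describe a weighted curve or region in frequency space. -/
theorem integral_ft_comp_mul {Ω : Type*} [MeasurableSpace Ω] {μ : Measure Ω} [SFinite μ]
    {f : Plane → ℝ} (hf : Integrable f) {c : Ω → Plane} (hc : Measurable c) {w : Ω → ℂ}
    (hw : Integrable w μ) :
    ∫ ω, ft f (c ω) * w ω ∂μ = ∫ x, f x • ∫ ω, fourierKernel x (c ω) * w ω ∂μ := by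
  have hint : Integrable (Function.uncurry fun ω x => fourierKernel x (c ω) * f x * w ω)
      (μ.prod volume) := by
    refine (hw.mul_prod hf.ofReal).mono ?_ (ae_of_all _ fun p => ?_)
    · exact ((continuous_fourierKernel.measurable.comp (measurable_snd.prodMk
        (hc.comp measurable_fst))).aestronglyMeasurable.mul
        hf.ofReal.aestronglyMeasurable.comp_snd).mul hw.aestronglyMeasurable.comp_fst
    · simp [Function.uncurry, norm_fourierKernel, mul_comm]
  calc ∫ ω, ft f (c ω) * w ω ∂μ = ∫ ω, (∫ x, fourierKernel x (c ω) * f x * w ω) ∂μ := by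
        simp_rw [ft, ← integral_mul_const]; rfl
    _ = ∫ x, ∫ ω, fourierKernel x (c ω) * f x * w ω ∂μ := integral_integral_swap hint
    _ = ∫ x, f x • ∫ ω, fourierKernel x (c ω) * w ω ∂μ := by
        congr 1 with x
        rw [← integral_smul]
        congr 1 with ω
        rw [Complex.real_smul]
        ring

theorem integral_fourierKernel_mul_rot_invariant {w : Plane → ℂ}
    (hw : ∀ φ ξ, w (rot φ ξ) = w ξ) (φ : ℝ) (x : Plane) :
    ∫ ξ, fourierKernel (rot φ x) ξ * w ξ = ∫ ξ, fourierKernel x ξ * w ξ := by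
  rw [← integral_comp_rot φ]
  simp only [fourierKernel_rot, hw]

theorem integral_fourierKernel_polar_rot_invariant (ρ φ : ℝ) (x : Plane) :
    ∫ β in Ioc 0 (2 * π), fourierKernel (rot φ x) (ρ * Real.cos β, ρ * Real.sin β) =
      ∫ β in Ioc 0 (2 * π), fourierKernel x (ρ * Real.cos β, ρ * Real.sin β) := by
  have hper : Function.Periodic
      (fun β => fourierKernel x (ρ * Real.cos β, ρ * Real.sin β)) (2 * π) :=
    fun β => by simp only [Real.cos_add_two_pi, Real.sin_add_two_pi]
  simp only [fourierKernel_rot_left, rot_polar, ← sub_eq_add_neg]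
  rw [← intervalIntegral.integral_of_le two_pi_pos.le,
    ← intervalIntegral.integral_of_le two_pi_pos.le, intervalIntegral.integral_comp_sub_right
      (fun β => fourierKernel x (ρ * Real.cos β, ρ * Real.sin β)),
    zero_sub, sub_eq_neg_add, hper.intervalIntegral_add_eq (-φ) 0, zero_add]

/-- **The Fourier transform preserves zero circular means**: if a Schwartz function `f`
has zero mean over every circle centered at the origin, then `∫ f̂ χ = 0` for every
radial Schwartz function `χ`, and `f̂` has zero mean over every circle centered at `0`. -/
theorem fourier_zero_circle_means (f : SchwartzMap Plane ℝ)
    (hf : ZeroCircleMeans (⇑f)) :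
    (∀ χ : SchwartzMap Plane ℝ, (∀ x y : Plane, en x = en y → χ x = χ y) →
      (∫ ξ : Plane, ft (⇑f) ξ * (χ ξ : ℂ)) = 0) ∧
    (∀ ρ : ℝ, 0 < ρ →
      (∫ β in (0:ℝ)..(2 * π), ft (⇑f) (ρ * Real.cos β, ρ * Real.sin β)) = 0) := by
  refine ⟨fun χ hχ => ?_, fun ρ _ => ?_⟩
  · have hχrot (φ : ℝ) (ξ : Plane) : (χ (rot φ ξ) : ℂ) = χ ξ := by
      rw [hχ _ _ (en_rot φ ξ)]
    have hfubini := integral_ft_comp_mul (μ := volume) (c := id) f.integrable measurable_id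
      χ.integrable.ofReal
    exact hfubini.trans <| integral_eq_zero_of_zeroCircleMeans
      (hf.smul_of_rot_invariant (integral_fourierKernel_mul_rot_invariant hχrot))
  · have hcurve : Measurable fun β : ℝ => ((ρ * Real.cos β, ρ * Real.sin β) : Plane) := by
      fun_prop
    have hfubini := integral_ft_comp_mul (μ := volume.restrict (Ioc 0 (2 * π))) f.integrable
      hcurve (integrable_const (1 : ℂ))
    simp only [mul_one] at hfubini
    rw [intervalIntegral.integral_of_le two_pi_pos.le, hfubini]
    exact integral_eq_zero_of_zeroCircleMeans
      (hf.smul_of_rot_invariant (integral_fourierKernel_polar_rot_invariant ρ))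

end SQG
end
end

section
/- Let P ∈ ℕ and let h : ℝ² → ℂ be measurable with ∫_{ℝ²} (1+|ξ|)^{P−1} |h(ξ)| dξ < ∞. Suppose h is P-fold symmetric and has zero mean over every circle centered at the origin. Then ∫_{ℝ²} ξ₁^{a} ξ₂^{b} h(ξ) dξ = 0 for all nonnegative integers a, b with a + b ≤ P−1. -/
/-!
In polar coordinates the moment is `∫ ρ^(a+b+1) ∫ cos^a β sin^b β · h(ρ cos β, ρ sin β) dβ dρ`.
For each `ρ` the angular profile is `2π/P`-periodic with mean zero, so its Fourier coefficients
of order `|k| < P` vanish, while `cos^a β sin^b β` is a trigonometric polynomial of degree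
`a + b < P`: multiplying by `cos` or `sin` shifts the frequency by `±1`.
-/

noncomputable section

open MeasureTheory Real Filter Topology Set

open Function

theorem Function.Periodic.of_div_nat {α : Type*} {g : ℝ → α} {T : ℝ} {P : ℕ}
    (hg : Periodic g (T / P)) (hP : P ≠ 0) : Periodic g T := by
  simpa [mul_div_cancel₀ T (Nat.cast_ne_zero.2 hP : (P : ℝ) ≠ 0)] using hg.nat_mul P

theorem cexp_int_mul_two_pi_div_ne_one {P : ℕ} {k : ℤ} (hk0 : k ≠ 0) (hk : k.natAbs < P) :
    Complex.exp (k * (2 * π / P : ℝ) * Complex.I) ≠ 1 := by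
  rw [Ne, Complex.exp_eq_one_iff]
  rintro ⟨n, hn⟩
  have hP : (P : ℂ) ≠ 0 := by exact_mod_cast ((Nat.zero_le _).trans_lt hk).ne'
  have hkn : (k : ℂ) = n * P := by
    push_cast at hn
    field_simp at hn
    linear_combination hn
  have hdvd : (P : ℤ) ∣ k := ⟨n, by exact_mod_cast hkn.trans (mul_comm _ _)⟩
  exact hk0 (Int.eq_zero_of_dvd_of_natAbs_lt_natAbs hdvd (by simpa using hk))

/-- Translating by `2π/P` multiplies the integral by `exp (2πik/P) ≠ 1`. -/
theorem Function.Periodic.integral_cexp_int_mul_mul_eq_zero {g : ℝ → ℂ} {P : ℕ}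
    (hg : Periodic g (2 * π / P)) (t : ℝ) {k : ℤ} (hk0 : k ≠ 0) (hk : k.natAbs < P) :
    ∫ β in t..t + 2 * π, Complex.exp (k * β * Complex.I) * g β = 0 := by
  set c := 2 * π / P
  set H : ℝ → ℂ := fun β => Complex.exp (k * β * Complex.I) * g β
  have hg2π : Periodic g (2 * π) := hg.of_div_nat (by omega)
  have hH : Periodic H (2 * π) := fun β => by
    simp only [H, hg2π β]
    congr 1
    rw [show (k * ((β + 2 * π : ℝ) : ℂ) * Complex.I) = k * β * Complex.I + k * (2 * π * Complex.I)
      by push_cast; ring, Complex.exp_add, Complex.exp_int_mul_two_pi_mul_I, mul_one]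
  have hshift : ∀ β, H (β + c) = Complex.exp (k * c * Complex.I) * H β := fun β => by
    simp only [H, hg β, ← mul_assoc, ← Complex.exp_add]
    push_cast
    ring_nf
  have hfix : Complex.exp (k * c * Complex.I) * (∫ β in t..t + 2 * π, H β) =
      ∫ β in t..t + 2 * π, H β :=
    calc _ = ∫ β in t..t + 2 * π, H (β + c) := by
            simp only [hshift, intervalIntegral.integral_const_mul]
      _ = ∫ β in t + c..t + c + 2 * π, H β := by
            rw [intervalIntegral.integral_comp_add_right]; ring_nf
      _ = _ := hH.intervalIntegral_add_eq _ _
  exact (mul_left_eq_self₀.1 hfix).resolve_left (cexp_int_mul_two_pi_div_ne_one hk0 hk)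

section
variable {f : ℝ → ℂ} {s t : ℝ}

theorem IntervalIntegrable.cexp_int_mul_mul (hf : IntervalIntegrable f volume s t) (k : ℤ) :
    IntervalIntegrable (fun β : ℝ => Complex.exp (k * β * Complex.I) * f β) volume s t :=
  hf.continuousOn_mul (by fun_prop)

theorem integral_cexp_int_mul_mul_cos_mul (hf : IntervalIntegrable f volume s t) (k : ℤ) :
    ∫ β in s..t, Complex.exp (k * β * Complex.I) * ((cos β : ℂ) * f β) =
      ((∫ β in s..t, Complex.exp ((k + 1 : ℤ) * β * Complex.I) * f β) +
        ∫ β in s..t, Complex.exp ((k - 1 : ℤ) * β * Complex.I) * f β) / 2 := by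
  rw [← intervalIntegral.integral_add (hf.cexp_int_mul_mul _) (hf.cexp_int_mul_mul _),
    ← intervalIntegral.integral_div]
  refine intervalIntegral.integral_congr fun β _ => ?_
  push_cast
  simp only [Complex.cos, add_mul, sub_mul, one_mul, Complex.exp_add, Complex.exp_sub, neg_mul,
    Complex.exp_neg]
  field_simp

theorem integral_cexp_int_mul_mul_sin_mul (hf : IntervalIntegrable f volume s t) (k : ℤ) :
    ∫ β in s..t, Complex.exp (k * β * Complex.I) * ((sin β : ℂ) * f β) =
      ((∫ β in s..t, Complex.exp ((k - 1 : ℤ) * β * Complex.I) * f β) -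
        ∫ β in s..t, Complex.exp ((k + 1 : ℤ) * β * Complex.I) * f β) * Complex.I / 2 := by
  rw [← intervalIntegral.integral_sub (hf.cexp_int_mul_mul _) (hf.cexp_int_mul_mul _),
    ← intervalIntegral.integral_mul_const, ← intervalIntegral.integral_div]
  refine intervalIntegral.integral_congr fun β _ => ?_
  push_cast
  simp only [Complex.sin, add_mul, sub_mul, one_mul, Complex.exp_add, Complex.exp_sub, neg_mul,
    Complex.exp_neg]
  field_simp

theorem integral_cexp_int_mul_mul_cos_pow_mul_sin_pow_mul_eq_zero {N : ℕ}
    (hf : IntervalIntegrable f volume s t)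
    (hmodes : ∀ k : ℤ, k.natAbs < N → ∫ β in s..t, Complex.exp (k * β * Complex.I) * f β = 0)
    (a b : ℕ) (k : ℤ) (hk : k.natAbs + a + b < N) :
    ∫ β in s..t, Complex.exp (k * β * Complex.I) * ((cos β : ℂ) ^ a * (sin β : ℂ) ^ b * f β) =
      0 := by
  have hint : ∀ a b : ℕ,
      IntervalIntegrable (fun β : ℝ => (cos β : ℂ) ^ a * (sin β : ℂ) ^ b * f β) volume s t :=
    fun a b => hf.continuousOn_mul (by fun_prop)
  induction a generalizing k with
  | zero =>
    induction b generalizing k with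
    | zero => simpa using hmodes k (by omega)
    | succ b ih =>
      have hsplit : ∀ β : ℝ, (cos β : ℂ) ^ 0 * (sin β : ℂ) ^ (b + 1) * f β =
          sin β * ((cos β : ℂ) ^ 0 * (sin β : ℂ) ^ b * f β) := fun β => by ring
      simp_rw [hsplit]
      rw [integral_cexp_int_mul_mul_sin_mul (hint 0 b), ih (k - 1) (by omega),
        ih (k + 1) (by omega)]
      simp
  | succ a ih =>
    have hsplit : ∀ β : ℝ, (cos β : ℂ) ^ (a + 1) * (sin β : ℂ) ^ b * f β =
        cos β * ((cos β : ℂ) ^ a * (sin β : ℂ) ^ b * f β) := fun β => by ring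
    simp_rw [hsplit]
    rw [integral_cexp_int_mul_mul_cos_mul (hint a b), ih (k - 1) (by omega),
      ih (k + 1) (by omega)]
    simp

end

section
variable {E : Type*} [NormedAddCommGroup E] [NormedSpace ℝ E] {f : ℝ × ℝ → E}

theorem MeasureTheory.Integrable.integrableOn_polarCoord_target (hf : Integrable f) :
    IntegrableOn (fun p : ℝ × ℝ => p.1 • f (polarCoord.symm p)) polarCoord.target := by
  have hsource : IntegrableOn f (polarCoord.symm '' polarCoord.target) := by
    rw [polarCoord.symm_image_target_eq_source]
    exact hf.integrableOn
  rw [integrableOn_image_iff_integrableOn_abs_det_fderiv_smul volume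
    polarCoord.open_target.measurableSet (fun p _ => (hasFDerivAt_polarCoord_symm p).hasFDerivWithinAt)
    polarCoord.symm.injOn] at hsource
  refine hsource.congr_fun (fun p hp => ?_) polarCoord.open_target.measurableSet
  simp only [det_fderivPolarCoordSymm, abs_of_pos (mem_Ioi.1 hp.1)]

theorem MeasureTheory.Integrable.ae_intervalIntegrable_circle (hf : Integrable f) :
    ∀ᵐ ρ ∂volume.restrict (Ioi 0),
      IntervalIntegrable (fun β => f (polarCoord.symm (ρ, β))) volume (-π) π := by
  have hprod := hf.integrableOn_polarCoord_target
  rw [polarCoord_target, IntegrableOn, Measure.volume_eq_prod, ← Measure.prod_restrict] at hprod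
  filter_upwards [hprod.prod_right_ae, ae_restrict_mem measurableSet_Ioi] with ρ hρint hρ
  rw [intervalIntegrable_iff_integrableOn_Ioo_of_le (by linarith [pi_pos])]
  exact (integrable_smul_iff (mem_Ioi.1 hρ).ne' _).1 hρint

theorem integral_eq_zero_of_ae_integral_circle_eq_zero (hf : Integrable f)
    (hcircle : ∀ᵐ ρ ∂volume.restrict (Ioi 0), ∫ β in -π..π, f (polarCoord.symm (ρ, β)) = 0) :
    ∫ p, f p = 0 := by
  have hprod := hf.integrableOn_polarCoord_target
  rw [← integral_comp_polarCoord_symm, polarCoord_target, Measure.volume_eq_prod,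
    setIntegral_prod _ (by simpa [Measure.volume_eq_prod] using hprod)]
  refine integral_eq_zero_of_ae ?_
  filter_upwards [hcircle] with ρ hρ
  rw [integral_smul, ← integral_Ioc_eq_integral_Ioo, ← intervalIntegral.integral_of_le
    (by linarith [pi_pos]), hρ, smul_zero]
  rfl

end

theorem Function.Periodic.integral_cos_pow_mul_sin_pow_mul_eq_zero {g : ℝ → ℂ} {P : ℕ}
    (hg : Periodic g (2 * π / P)) {t : ℝ} (hint : IntervalIntegrable g volume t (t + 2 * π))
    (hmean : ∫ β in t..t + 2 * π, g β = 0) {a b : ℕ} (hab : a + b < P) :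
    ∫ β in t..t + 2 * π, (cos β : ℂ) ^ a * (sin β : ℂ) ^ b * g β = 0 := by
  have hmodes (k : ℤ) (hk : k.natAbs < P) :
      ∫ β in t..t + 2 * π, Complex.exp (k * β * Complex.I) * g β = 0 := by
    rcases eq_or_ne k 0 with rfl | hk0
    · simpa using hmean
    · exact hg.integral_cexp_int_mul_mul_eq_zero t hk0 hk
  simpa using integral_cexp_int_mul_mul_cos_pow_mul_sin_pow_mul_eq_zero hint hmodes a b 0
    (by simpa using hab)

namespace SQG

theorem rot_polarCoord_symm (φ ρ β : ℝ) :
    rot φ (polarCoord.symm (ρ, β)) = polarCoord.symm (ρ, β + φ) := by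
  simp only [rot, polarCoord_symm_apply, cos_add, sin_add, Prod.mk.injEq]
  constructor <;> ring

theorem en_nonneg (ξ : Plane) : 0 ≤ en ξ := Real.sqrt_nonneg _

theorem abs_fst_le_en (ξ : Plane) : |ξ.1| ≤ en ξ :=
  Real.abs_le_sqrt (le_add_of_nonneg_right (sq_nonneg _))

theorem abs_snd_le_en (ξ : Plane) : |ξ.2| ≤ en ξ :=
  Real.abs_le_sqrt (le_add_of_nonneg_left (sq_nonneg _))

theorem abs_fst_pow_mul_snd_pow_le {a b n : ℕ} (hab : a + b ≤ n) (ξ : Plane) :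
    |ξ.1 ^ a * ξ.2 ^ b| ≤ (1 + en ξ) ^ n := by
  have h1 : |ξ.1| ≤ 1 + en ξ := (abs_fst_le_en ξ).trans (le_add_of_nonneg_left zero_le_one)
  have h2 : |ξ.2| ≤ 1 + en ξ := (abs_snd_le_en ξ).trans (le_add_of_nonneg_left zero_le_one)
  calc |ξ.1 ^ a * ξ.2 ^ b| = |ξ.1| ^ a * |ξ.2| ^ b := by rw [abs_mul, abs_pow, abs_pow]
    _ ≤ (1 + en ξ) ^ a * (1 + en ξ) ^ b := by
      gcongr
      exact pow_nonneg (by linarith [en_nonneg ξ]) a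
    _ = (1 + en ξ) ^ (a + b) := (pow_add _ _ _).symm
    _ ≤ (1 + en ξ) ^ n := pow_le_pow_right₀ (by linarith [en_nonneg ξ]) hab

/-- **Vanishing of low order moments of a `P`-fold symmetric function with zero
circular means**: `∫ ξ₁^a ξ₂^b h(ξ) dξ = 0` whenever `a + b ≤ P − 1`. -/
theorem moments_vanish (P : ℕ) (h : Plane → ℂ) (hmeas : Measurable h)
    (hint : Integrable (fun ξ : Plane => (1 + en ξ) ^ (P - 1) * ‖h ξ‖))
    (hsym : PFoldSymmetric P h) (hzm : ZeroCircleMeans h) :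
    ∀ a b : ℕ, a + b + 1 ≤ P →
      (∫ ξ : Plane, ((ξ.1 ^ a * ξ.2 ^ b : ℝ) : ℂ) * h ξ) = 0 := by
  intro a b hab
  have hP : P ≠ 0 := by omega
  have h_int : Integrable h := hint.mono' hmeas.aestronglyMeasurable (ae_of_all _ fun ξ =>
    le_mul_of_one_le_left (norm_nonneg _) (one_le_pow₀ (by linarith [en_nonneg ξ])))
  have hmoment_int : Integrable fun ξ : Plane => ((ξ.1 ^ a * ξ.2 ^ b : ℝ) : ℂ) * h ξ :=
    hint.mono' (by fun_prop) (ae_of_all _ fun ξ => by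
      rw [norm_mul, Complex.norm_real, Real.norm_eq_abs]
      exact mul_le_mul_of_nonneg_right (abs_fst_pow_mul_snd_pow_le (by omega) ξ) (norm_nonneg _))
  refine integral_eq_zero_of_ae_integral_circle_eq_zero hmoment_int ?_
  filter_upwards [h_int.ae_intervalIntegrable_circle, ae_restrict_mem measurableSet_Ioi]
    with ρ hρint hρ
  set g : ℝ → ℂ := fun β => h (polarCoord.symm (ρ, β))
  have hg : Periodic g (2 * π / P) := fun β => by
    simp only [g, ← rot_polarCoord_symm]
    exact hsym _
  have hmean : ∫ β in -π..-π + 2 * π, g β = 0 := by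
    rw [(hg.of_div_nat hP).intervalIntegral_add_eq (-π) 0, zero_add]
    simpa [g] using hzm ρ hρ
  have hπ : -π + 2 * π = π := by ring
  calc ∫ β in -π..π, ((polarCoord.symm (ρ, β)).1 ^ a * (polarCoord.symm (ρ, β)).2 ^ b
          : ℝ) * h (polarCoord.symm (ρ, β))
      = (ρ : ℂ) ^ (a + b) * ∫ β in -π..π, (cos β : ℂ) ^ a * (sin β : ℂ) ^ b * g β := by
        rw [← intervalIntegral.integral_const_mul]
        congr with β
        simp only [g, polarCoord_symm_apply]
        push_cast
        ring
    _ = 0 := by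
        have hmoment := hg.integral_cos_pow_mul_sin_pow_mul_eq_zero (a := a) (b := b)
          (by rwa [hπ]) hmean (by omega)
        rw [hπ] at hmoment
        rw [hmoment, mul_zero]

end SQG
end
end

section
/- Fix s ∈ (3/2,2), K ≥ 1, λ̃, Ñ > 1, g ∈ C_c^∞(ℝ²). Define the perturbation profile ω_p(x) := K^{−1} λ̃^{1−s} Ñ^{−s} g(λ̃x) sin(λ̃Ñ x₁) and its pseudovelocity v̄[ω_p](x) := K^{−1} λ̃^{1−s} Ñ^{−s} g(λ̃x) (0, cos(λ̃Ñ x₁)). Then the pointwise identity v̄[ω_p](x)·∇ω_p(x) = K^{−2} λ̃^{3−2s} Ñ^{−2s} g(λ̃x) ∂₂g(λ̃x) cos(λ̃Ñ x₁) sin(λ̃Ñ x₁) holds for all x ∈ ℝ², and for every k ∈ ℕ and α ∈ [0,1), ‖v̄[ω_p]·∇ω_p‖_{C^{k,α}} ≤ C_{k,α} ‖g‖_{C^{k+2}}² K^{−2} λ̃^{k+α+3−2s} Ñ^{k+α−2s} with C_{k,α} depending only on k, α. -/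
noncomputable section

open MeasureTheory Real Filter Topology Set

namespace SQG

/-- The perturbation profile `ω_p(x) = K⁻¹ λ̃^{1−s} Ñ^{−s} g(λ̃x) sin(λ̃Ñx₁)`. -/
def omegaP (s K lt Nt : ℝ) (g : Plane → ℝ) (x : Plane) : ℝ :=
  K⁻¹ * lt ^ (1 - s) * Nt ^ (-s) * g (lt • x) * Real.sin (lt * Nt * x.1)

/-- The pseudovelocity of the perturbation,
`v̄[ω_p](x) = K⁻¹ λ̃^{1−s} Ñ^{−s} g(λ̃x) (0, cos(λ̃Ñx₁))`. -/
def vBarP (s K lt Nt : ℝ) (g : Plane → ℝ) (x : Plane) : Plane :=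
  (K⁻¹ * lt ^ (1 - s) * Nt ^ (-s) * g (lt • x)) • ((0, Real.cos (lt * Nt * x.1)) : Plane)

/-!
Only the second component of `v̄[ω_p]` is nonzero, and `∂₂` does not see the carrier
`sin (λ̃ Ñ x₁)`, so `v̄[ω_p]·∇ω_p = (B/2) (g ∂₂g)(λ̃x) sin (2 λ̃ Ñ x₁)` with
`B = K⁻² λ̃^{3-2s} Ñ^{-2s}`. A derivative of this modulated wave costs a factor `λ̃` on the
envelope and `2 λ̃ Ñ` on the carrier; by the Leibniz rule derivatives of order `m` are
`O(B ‖g‖²_{C^{m+1}} (4 λ̃ Ñ)^m)`. Interpolating the sup bound of order `k` with the Lipschitz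
bound of order `k + 1` gives the Hölder seminorm its factor `(λ̃ Ñ)^{k+α}`.
-/

open scoped ContDiff

section PartialDerivatives

variable {f g : Plane → ℝ}

@[fun_prop]
theorem contDiff_pd (hf : ContDiff ℝ ∞ f) (i : Fin 2) : ContDiff ℝ ∞ (pd i f) :=
  (hf.fderiv_right le_rfl).clm_apply contDiff_const

theorem pd_add (hf : Differentiable ℝ f) (hg : Differentiable ℝ g) (i : Fin 2) :
    pd i (f + g) = pd i f + pd i g := by
  ext x
  simp [pd, fderiv_add (hf x) (hg x)]

theorem pd_mul (hf : Differentiable ℝ f) (hg : Differentiable ℝ g) (i : Fin 2) :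
    pd i (f * g) = pd i f * g + f * pd i g := by
  ext x
  simp [pd, fderiv_mul (hf x) (hg x)]
  ring

theorem pd_zero (i : Fin 2) : pd i (0 : Plane → ℝ) = 0 := by
  ext x
  simp [pd]

theorem hasCompactSupport_pd (hf : HasCompactSupport f) (i : Fin 2) :
    HasCompactSupport (pd i f) :=
  (hf.fderiv ℝ).comp_left (g := fun L : Plane →L[ℝ] ℝ => L (if i = 0 then (1, 0) else (0, 1))) rfl

theorem pd_comm (hf : ContDiff ℝ ∞ f) : pd 1 (pd 0 f) = pd 0 (pd 1 f) := by
  have hdiff : Differentiable ℝ (fderiv ℝ f) :=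
    (hf.fderiv_right (m := ∞) le_rfl).differentiable (by simp)
  have hsecond (v w x : Plane) :
      fderiv ℝ (fun y => fderiv ℝ f y v) x w = fderiv ℝ (fderiv ℝ f) x w v := by
    rw [fderiv_clm_apply (hdiff x) (differentiableAt_const v)]
    simp
  have hsymm (x : Plane) : IsSymmSndFDerivAt ℝ f x := hf.contDiffAt.isSymmSndFDerivAt <| by
    rw [minSmoothness_of_isRCLikeNormedField]
    exact WithTop.coe_le_coe.2 le_top
  ext x
  change fderiv ℝ (fun y => fderiv ℝ f y (1, 0)) x (0, 1)
    = fderiv ℝ (fun y => fderiv ℝ f y (0, 1)) x (1, 0)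
  rw [hsecond, hsecond]
  exact hsymm x _ _

theorem pdIter_one_pd_zero (hf : ContDiff ℝ ∞ f) (b : ℕ) :
    (pd 1)^[b] (pd 0 f) = pd 0 ((pd 1)^[b] f) := by
  induction b generalizing f with
  | zero => rfl
  | succ b ih =>
    rw [Function.iterate_succ_apply, pd_comm hf, ih (contDiff_pd hf 1),
      Function.iterate_succ_apply]

theorem pdm_pd_zero (hf : ContDiff ℝ ∞ f) (a b : ℕ) : pdm a b (pd 0 f) = pdm (a + 1) b f := by
  rw [pdm, pdm, pdIter_one_pd_zero hf, Function.iterate_succ_apply]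

theorem pdm_pd_one (a b : ℕ) : pdm a b (pd 1 f) = pdm a (b + 1) f := by
  rw [pdm, pdm, Function.iterate_succ_apply]

end PartialDerivatives

/-- `pdWord [i₁, …, iₙ] f = ∂_{iₙ} ⋯ ∂_{i₁} f`. -/
def pdWord (l : List (Fin 2)) (f : Plane → ℝ) : Plane → ℝ :=
  l.foldl (fun f i => pd i f) f

section Words

variable {f g : Plane → ℝ}

@[simp] theorem pdWord_nil (f : Plane → ℝ) : pdWord [] f = f := rfl

@[simp] theorem pdWord_cons (i : Fin 2) (l : List (Fin 2)) (f : Plane → ℝ) :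
    pdWord (i :: l) f = pdWord l (pd i f) := rfl

theorem pdWord_append (l l' : List (Fin 2)) (f : Plane → ℝ) :
    pdWord (l ++ l') f = pdWord l' (pdWord l f) :=
  List.foldl_append

theorem pdWord_replicate (n : ℕ) (i : Fin 2) (f : Plane → ℝ) :
    pdWord (List.replicate n i) f = (pd i)^[n] f := by
  induction n generalizing f with
  | zero => rfl
  | succ n ih => rw [List.replicate_succ, pdWord_cons, ih, Function.iterate_succ_apply]

theorem pdm_eq_pdWord (a b : ℕ) (f : Plane → ℝ) :
    pdm a b f = pdWord (List.replicate b 1 ++ List.replicate a 0) f := by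
  rw [pdWord_append, pdWord_replicate, pdWord_replicate, pdm]

theorem pd_pdm_eq_pdWord (i : Fin 2) (a b : ℕ) (f : Plane → ℝ) :
    pd i (pdm a b f) = pdWord (List.replicate b 1 ++ List.replicate a 0 ++ [i]) f := by
  rw [pdWord_append, ← pdm_eq_pdWord]
  rfl

theorem contDiff_pdWord (hf : ContDiff ℝ ∞ f) (l : List (Fin 2)) : ContDiff ℝ ∞ (pdWord l f) := by
  induction l generalizing f with
  | nil => exact hf
  | cons i l ih => exact ih (contDiff_pd hf i)

theorem pdWord_zero (l : List (Fin 2)) : pdWord l (0 : Plane → ℝ) = 0 := by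
  induction l with
  | nil => rfl
  | cons i l ih => rw [pdWord_cons, pd_zero, ih]

theorem pdWord_add (hf : ContDiff ℝ ∞ f) (hg : ContDiff ℝ ∞ g) (l : List (Fin 2)) :
    pdWord l (f + g) = pdWord l f + pdWord l g := by
  induction l generalizing f g with
  | nil => rfl
  | cons i l ih =>
    rw [pdWord_cons, pd_add (hf.differentiable (by simp)) (hg.differentiable (by simp)),
      ih (contDiff_pd hf i) (contDiff_pd hg i)]
    rfl

theorem exists_pdWord_eq_pdm (hf : ContDiff ℝ ∞ f) (l : List (Fin 2)) :
    ∃ a b, a + b = l.length ∧ pdWord l f = pdm a b f := by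
  induction l generalizing f with
  | nil => exact ⟨0, 0, rfl, rfl⟩
  | cons i l ih =>
    obtain ⟨a, b, hab, h⟩ := ih (contDiff_pd hf i)
    rw [pdWord_cons, h]
    match i with
    | 0 => exact ⟨a + 1, b, by simp [← hab]; omega, pdm_pd_zero hf a b⟩
    | 1 => exact ⟨a, b + 1, by simp [← hab]; omega, pdm_pd_one a b⟩

theorem contDiff_pdm (hf : ContDiff ℝ ∞ f) (a b : ℕ) : ContDiff ℝ ∞ (pdm a b f) :=
  pdm_eq_pdWord a b f ▸ contDiff_pdWord hf _

theorem hasCompactSupport_pdWord (hf : HasCompactSupport f) (l : List (Fin 2)) :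
    HasCompactSupport (pdWord l f) := by
  induction l generalizing f with
  | nil => exact hf
  | cons i l ih => exact ih (hasCompactSupport_pd hf i)

end Words

section Waves

theorem pd_const_mul_comp_smul {h : Plane → ℝ} (hh : Differentiable ℝ h) (a c : ℝ) (i : Fin 2) :
    pd i (fun x => a * h (c • x)) = fun x => a * c * pd i h (c • x) := by
  ext x
  have hd : HasFDerivAt (fun x => a * h (c • x))
      (a • (fderiv ℝ h (c • x)).comp (c • ContinuousLinearMap.id ℝ Plane)) x :=
    ((hh _).hasFDerivAt.comp x ((hasFDerivAt_id x).const_smul c)).const_mul a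
  simp [pd, hd.fderiv]
  ring

theorem pdWord_const_mul_comp_smul {h : Plane → ℝ} (hh : ContDiff ℝ ∞ h) (a c : ℝ)
    (l : List (Fin 2)) :
    pdWord l (fun x => a * h (c • x)) = fun x => a * c ^ l.length * pdWord l h (c • x) := by
  induction l generalizing a h with
  | nil => simp
  | cons i l ih =>
    rw [pdWord_cons, pd_const_mul_comp_smul (hh.differentiable (by simp)),
      ih (contDiff_pd hh i), pdWord_cons, List.length_cons, pow_succ]
    ring_nf

theorem hasFDerivAt_sineWave (a μ θ : ℝ) (x : Plane) :
    HasFDerivAt (fun x : Plane => a * sin (μ * x.1 + θ))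
      (a • (cos (μ * x.1 + θ) • (μ • ContinuousLinearMap.fst ℝ ℝ ℝ))) x :=
  (((hasFDerivAt_fst.const_mul μ).add_const θ).sin).const_mul a

theorem pd_zero_sineWave (a μ θ : ℝ) :
    pd 0 (fun x : Plane => a * sin (μ * x.1 + θ))
      = fun x => a * μ * sin (μ * x.1 + (θ + π / 2)) := by
  ext x
  simp [pd, (hasFDerivAt_sineWave a μ θ x).fderiv, ← add_assoc, sin_add_pi_div_two]
  ring

theorem pd_one_sineWave (a μ θ : ℝ) : pd 1 (fun x : Plane => a * sin (μ * x.1 + θ)) = 0 := by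
  ext x
  simp [pd, (hasFDerivAt_sineWave a μ θ x).fderiv]

theorem abs_pdWord_sineWave_le (a μ θ : ℝ) (l : List (Fin 2)) (x : Plane) :
    |pdWord l (fun x : Plane => a * sin (μ * x.1 + θ)) x| ≤ |a| * |μ| ^ l.length := by
  induction l generalizing a θ with
  | nil => simpa [abs_mul] using mul_le_of_le_one_right (abs_nonneg a) (abs_sin_le_one _)
  | cons i l ih =>
    match i with
    | 0 => simpa [pd_zero_sineWave, abs_mul, pow_succ', mul_assoc] using ih (a * μ) (θ + π / 2)
    | 1 =>
      rw [pdWord_cons, pd_one_sineWave, pdWord_zero, Pi.zero_apply, abs_zero]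
      positivity

theorem pd_one_sin (μ : ℝ) : pd 1 (fun x : Plane => sin (μ * x.1)) = 0 := by
  simpa using pd_one_sineWave 1 μ 0

end Waves

/-- Bounds on all words of partial derivatives, not only on the ordered ones `pdm a b`, make the
Leibniz induction structural; `exists_pdWord_eq_pdm` converts back for smooth functions. -/
def DerivBound (n : ℕ) (A R : ℝ) (f : Plane → ℝ) : Prop :=
  ∀ l : List (Fin 2), l.length ≤ n → ∀ x, |pdWord l f x| ≤ A * R ^ l.length

namespace DerivBound

variable {n : ℕ} {A B R S : ℝ} {f g : Plane → ℝ}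

theorem nonneg (h : DerivBound n A R f) : 0 ≤ A := by
  simpa using (abs_nonneg _).trans (h [] (Nat.zero_le n) 0)

theorem of_le {m : ℕ} (h : DerivBound n A R f) (hmn : m ≤ n) : DerivBound m A R f :=
  fun l hl => h l (hl.trans hmn)

theorem mono {A' R' : ℝ} (h : DerivBound n A R f) (hA : A ≤ A') (hR : 0 ≤ R) (hRR' : R ≤ R') :
    DerivBound n A' R' f := fun l hl x =>
  (h l hl x).trans <| mul_le_mul hA (pow_le_pow_left₀ hR hRR' _) (by positivity)
    (h.nonneg.trans hA)

theorem pd (h : DerivBound (n + 1) A R f) (i : Fin 2) : DerivBound n (A * R) R (pd i f) :=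
  fun l hl x => by simpa [pow_succ', mul_assoc] using h (i :: l) (by simpa) x

/-- Each derivative falls on one of the two factors, whence the rate `R + S`. -/
theorem mul (hf : ContDiff ℝ ∞ f) (hg : ContDiff ℝ ∞ g) (hbf : DerivBound n A R f)
    (hbg : DerivBound n B S g) : DerivBound n (A * B) (R + S) (f * g) := by
  intro l
  induction l generalizing n f g A B with
  | nil =>
    intro _ x
    have hfx := hbf [] (Nat.zero_le n) x
    have hgx := hbg [] (Nat.zero_le n) x
    simp only [pdWord_nil, List.length_nil, pow_zero, mul_one] at hfx hgx ⊢
    rw [Pi.mul_apply, abs_mul]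
    exact mul_le_mul hfx hgx (abs_nonneg _) hbf.nonneg
  | cons i l ih =>
    intro hl x
    obtain ⟨m, rfl⟩ : ∃ m, n = m + 1 := ⟨n - 1, by simp at hl; omega⟩
    have hl' : l.length ≤ m := by simpa using hl
    have hdf := hf.differentiable (by simp)
    have hdg := hg.differentiable (by simp)
    rw [pdWord_cons, pd_mul hdf hdg i, pdWord_add (f := SQG.pd i f * g) (g := f * SQG.pd i g)
      ((contDiff_pd hf i).mul hg) (hf.mul (contDiff_pd hg i)), Pi.add_apply]
    have h1 := ih (contDiff_pd hf i) hg (hbf.pd i) (hbg.of_le m.le_succ) hl' x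
    have h2 := ih hf (contDiff_pd hg i) (hbf.of_le m.le_succ) (hbg.pd i) hl' x
    calc _ ≤ _ := abs_add_le _ _
      _ ≤ A * R * B * (R + S) ^ l.length + A * (B * S) * (R + S) ^ l.length := add_le_add h1 h2
      _ = A * B * (R + S) ^ (i :: l).length := by rw [List.length_cons, pow_succ]; ring

theorem const_mul_comp_smul {h : Plane → ℝ} (hh : ContDiff ℝ ∞ h) (hb : DerivBound n A R h)
    (a c : ℝ) : DerivBound n (|a| * A) (|c| * R) (fun x => a * h (c • x)) := fun l hl x => by
  rw [pdWord_const_mul_comp_smul hh, abs_mul, abs_mul, abs_pow, mul_pow]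
  have hbx := hb l hl (c • x)
  have hA := hb.nonneg
  calc _ ≤ |a| * |c| ^ l.length * (A * R ^ l.length) := by gcongr
    _ = _ := by ring

end DerivBound

theorem derivBound_sin (n : ℕ) (μ : ℝ) : DerivBound n 1 |μ| (fun x : Plane => sin (μ * x.1)) :=
  fun l _ x => by simpa using abs_pdWord_sineWave_le 1 μ 0 l x

section Norms

variable {f : Plane → ℝ}

theorem supAbs_nonneg (f : Plane → ℝ) : 0 ≤ supAbs f :=
  Real.iSup_nonneg fun _ => abs_nonneg _

theorem supAbs_le {c : ℝ} (hc : 0 ≤ c) (h : ∀ x, |f x| ≤ c) : supAbs f ≤ c :=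
  Real.iSup_le h hc

theorem abs_le_supAbs (hc : Continuous f) (hs : HasCompactSupport f) (x : Plane) :
    |f x| ≤ supAbs f := by
  obtain ⟨C, hC⟩ := hc.abs.bounded_above_of_compact_support (hs.comp_left abs_zero)
  exact le_ciSup ⟨C, by rintro _ ⟨y, rfl⟩; simpa using hC y⟩ x

theorem supAbs_pdm_le_cknorm {n a b : ℕ} (h : a + b ≤ n) (f : Plane → ℝ) :
    supAbs (pdm a b f) ≤ cknorm n f :=
  calc supAbs (pdm a b f) ≤ ∑ b' ∈ Finset.range (n + 1 - a), supAbs (pdm a b' f) :=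
        Finset.single_le_sum (f := fun b' => supAbs (pdm a b' f)) (fun _ _ => supAbs_nonneg _)
          (Finset.mem_range.2 (by omega))
    _ ≤ cknorm n f :=
        Finset.single_le_sum (f := fun a' => ∑ b' ∈ Finset.range (n + 1 - a'), supAbs (pdm a' b' f))
          (fun _ _ => Finset.sum_nonneg fun _ _ => supAbs_nonneg _) (Finset.mem_range.2 (by omega))

theorem cknorm_le {k : ℕ} {c : ℝ} (hc : 0 ≤ c) (h : ∀ a b, a + b ≤ k → ∀ x, |pdm a b f x| ≤ c) :
    cknorm k f ≤ (k + 1) ^ 2 * c := by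
  calc cknorm k f ≤ ∑ _a ∈ Finset.range (k + 1), ∑ _b ∈ Finset.range (k + 1), c := by
        refine Finset.sum_le_sum fun a ha => ?_
        refine (Finset.sum_le_sum fun b hb => supAbs_le hc (h a b ?_)).trans ?_
        · simp only [Finset.mem_range] at ha hb
          omega
        · exact Finset.sum_le_sum_of_subset_of_nonneg (Finset.range_subset_range.2 (by omega))
            fun _ _ _ => hc
    _ = (k + 1) ^ 2 * c := by simp; ring

theorem derivBound_cknorm (hf : ContDiff ℝ ∞ f) (hfc : HasCompactSupport f) (n : ℕ) :
    DerivBound n (cknorm n f) 1 f := fun l hl x => by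
  obtain ⟨a, b, hab, hpdm⟩ := exists_pdWord_eq_pdm hf l
  calc |pdWord l f x| ≤ supAbs (pdWord l f) :=
        abs_le_supAbs (contDiff_pdWord hf l).continuous (hasCompactSupport_pdWord hfc l) x
    _ ≤ cknorm n f := hpdm ▸ supAbs_pdm_le_cknorm (by omega) f
    _ = cknorm n f * 1 ^ l.length := by simp

theorem norm_le_en (x : Plane) : ‖x‖ ≤ en x :=
  max_le (Real.abs_le_sqrt (by nlinarith)) (Real.abs_le_sqrt (by nlinarith))

theorem norm_fderiv_le (x : Plane) : ‖fderiv ℝ f x‖ ≤ |pd 0 f x| + |pd 1 f x| := by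
  refine ContinuousLinearMap.opNorm_le_bound _ (by positivity) fun v => ?_
  have hv : v = v.1 • ((1 : ℝ), (0 : ℝ)) + v.2 • ((0 : ℝ), (1 : ℝ)) := by ext <;> simp
  have h1 : |v.1| ≤ ‖v‖ := le_max_left _ _
  have h2 : |v.2| ≤ ‖v‖ := le_max_right _ _
  calc ‖fderiv ℝ f x v‖ = |v.1 * pd 0 f x + v.2 * pd 1 f x| := by
        conv_lhs => rw [hv, map_add, map_smul, map_smul]
        simp [pd]
    _ ≤ |v.1| * |pd 0 f x| + |v.2| * |pd 1 f x| := by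
        rw [← abs_mul, ← abs_mul]
        exact abs_add_le _ _
    _ ≤ ‖v‖ * |pd 0 f x| + ‖v‖ * |pd 1 f x| := by gcongr
    _ = _ := by ring

theorem abs_sub_le_mul_en (hf : Differentiable ℝ f) {L : ℝ}
    (hL : ∀ x, |pd 0 f x| + |pd 1 f x| ≤ L) (x y : Plane) :
    |f x - f y| ≤ L * en (x - y) := by
  have hL0 : 0 ≤ L := (add_nonneg (abs_nonneg _) (abs_nonneg _)).trans (hL x)
  calc |f x - f y| ≤ L * ‖x - y‖ :=
        convex_univ.norm_image_sub_le_of_norm_fderiv_le (fun z _ => hf z)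
          (fun z _ => norm_fderiv_le z |>.trans (hL z)) trivial trivial
    _ ≤ L * en (x - y) := by gcongr; exact norm_le_en _

theorem le_rpow_one_sub_mul_rpow {u a b α : ℝ} (hu : 0 ≤ u) (ha : u ≤ a) (hb : u ≤ b)
    (hα0 : 0 ≤ α) (hα1 : α ≤ 1) : u ≤ a ^ (1 - α) * b ^ α :=
  calc u = u ^ (1 - α) * u ^ α := by rw [← Real.rpow_add' hu (by simp), sub_add_cancel, Real.rpow_one]
    _ ≤ a ^ (1 - α) * b ^ α :=
        mul_le_mul (Real.rpow_le_rpow hu ha (by linarith)) (Real.rpow_le_rpow hu hb hα0)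
          (by positivity) (Real.rpow_nonneg (hu.trans ha) _)

theorem holderSemi_le (hf : Differentiable ℝ f) {S L α : ℝ} (hα0 : 0 ≤ α) (hα1 : α ≤ 1)
    (hS : ∀ x, |f x| ≤ S) (hL : ∀ x, |pd 0 f x| + |pd 1 f x| ≤ L) :
    holderSemi α f ≤ (2 * S) ^ (1 - α) * L ^ α := by
  have hS0 : 0 ≤ S := (abs_nonneg _).trans (hS 0)
  have hL0 : 0 ≤ L := (add_nonneg (abs_nonneg _) (abs_nonneg _)).trans (hL 0)
  refine Real.iSup_le (fun p => ?_) (by positivity)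
  have hlip := abs_sub_le_mul_en hf hL p.1 p.2
  have hd0 : 0 ≤ en (p.1 - p.2) := Real.sqrt_nonneg _
  rcases hd0.eq_or_lt with hd | hd
  · rw [← hd, mul_zero, abs_nonpos_iff] at hlip
    rw [hlip, abs_zero, zero_div]
    positivity
  rw [div_le_iff₀ (by positivity), mul_assoc, ← Real.mul_rpow hL0 hd.le]
  refine le_rpow_one_sub_mul_rpow (abs_nonneg _) ?_ hlip hα0 hα1
  linarith [abs_sub _ _ |>.trans (add_le_add (hS p.1) (hS p.2))]

end Norms

section HolderNorm

variable {k : ℕ} {A R α : ℝ} {f : Plane → ℝ}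

theorem abs_pdm_le_of_derivBound (h : DerivBound k A R f) {a b : ℕ} (hab : a + b ≤ k) (x : Plane) :
    |pdm a b f x| ≤ A * R ^ (a + b) := by
  have hl : (List.replicate b (1 : Fin 2) ++ List.replicate a 0).length = a + b := by simp [add_comm]
  rw [pdm_eq_pdWord, ← hl]
  exact h _ (hl.trans_le hab) x

theorem holderSemi_pdm_le_of_derivBound (hf : ContDiff ℝ ∞ f) (h : DerivBound (k + 1) A R f)
    (hR : 0 < R) (hα0 : 0 ≤ α) (hα1 : α ≤ 1) {a b : ℕ} (hab : a + b = k) :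
    holderSemi α (pdm a b f) ≤ 2 * A * R ^ ((k : ℝ) + α) := by
  have hpd (i : Fin 2) (x : Plane) : |pd i (pdm a b f) x| ≤ A * R ^ (k + 1) := by
    have hl : (List.replicate b 1 ++ List.replicate a 0 ++ [i]).length = k + 1 := by
      simp
      omega
    rw [pd_pdm_eq_pdWord, ← hl]
    exact h _ hl.le x
  have hinterp : (2 * (A * R ^ k)) ^ (1 - α) * (2 * (A * R ^ (k + 1))) ^ α
      = 2 * A * R ^ ((k : ℝ) + α) := by
    have hA := h.nonneg
    rw [show 2 * (A * R ^ (k + 1)) = 2 * (A * R ^ k) * R by ring,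
      Real.mul_rpow (by positivity) hR.le, ← mul_assoc, ← Real.rpow_add' (by positivity) (by simp),
      sub_add_cancel, Real.rpow_one, Real.rpow_add hR, Real.rpow_natCast]
    ring
  rw [← hinterp]
  refine holderSemi_le ((contDiff_pdm hf a b).differentiable (by simp)) hα0 hα1
    (fun x => ?_) (fun x => two_mul (A * R ^ (k + 1)) ▸ add_le_add (hpd 0 x) (hpd 1 x))
  simpa [hab] using abs_pdm_le_of_derivBound h (a := a) (b := b) (by omega) x

theorem ckanorm_le_of_derivBound (hf : ContDiff ℝ ∞ f) (h : DerivBound (k + 1) A R f) (hR : 1 ≤ R)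
    (hα0 : 0 ≤ α) (hα1 : α ≤ 1) :
    ckanorm k α f ≤ (k + 1) * (k + 3) * A * R ^ ((k : ℝ) + α) := by
  have hRk : R ^ k ≤ R ^ ((k : ℝ) + α) := by
    rw [← Real.rpow_natCast]
    exact Real.rpow_le_rpow_of_exponent_le hR (by linarith)
  have hck : cknorm k f ≤ (k + 1) ^ 2 * (A * R ^ ((k : ℝ) + α)) :=
    cknorm_le (by have := h.nonneg; positivity) fun a b hab x =>
      (abs_pdm_le_of_derivBound h (by omega) x).trans <|
        mul_le_mul_of_nonneg_left ((pow_le_pow_right₀ hR hab).trans hRk) h.nonneg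
  have hsum : ∑ a ∈ Finset.range (k + 1), holderSemi α (pdm a (k - a) f)
      ≤ (k + 1) * (2 * A * R ^ ((k : ℝ) + α)) := by
    simpa using Finset.sum_le_card_nsmul (Finset.range (k + 1))
      (fun a => holderSemi α (pdm a (k - a) f)) _ fun a ha =>
        holderSemi_pdm_le_of_derivBound hf h (by linarith) hα0 hα1
          (Nat.add_sub_of_le (Nat.lt_succ_iff.mp (Finset.mem_range.mp ha)))
  rw [ckanorm]
  linarith

end HolderNorm

/-- `v̄[ω_p]·∇ω_p`. -/
def selfInteraction (s K lt Nt : ℝ) (g : Plane → ℝ) (x : Plane) : ℝ :=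
  dot (vBarP s K lt Nt g x) (grad (omegaP s K lt Nt g) x)

section Perturbation

variable {g : Plane → ℝ} {s K lt Nt : ℝ}

theorem pd_one_omegaP (hg : Differentiable ℝ g) (x : Plane) :
    pd 1 (omegaP s K lt Nt g) x
      = K⁻¹ * lt ^ (1 - s) * Nt ^ (-s) * lt * pd 1 g (lt • x) * sin (lt * Nt * x.1) := by
  have hprod : omegaP s K lt Nt g = (fun x => K⁻¹ * lt ^ (1 - s) * Nt ^ (-s) * g (lt • x)) *
      fun x => sin (lt * Nt * x.1) := rfl
  have hdu : Differentiable ℝ fun x : Plane => K⁻¹ * lt ^ (1 - s) * Nt ^ (-s) * g (lt • x) :=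
    (hg.comp (differentiable_id.const_smul lt)).const_mul _
  have hdw : Differentiable ℝ fun x : Plane => sin (lt * Nt * x.1) := by fun_prop
  rw [hprod, pd_mul hdu hdw, pd_const_mul_comp_smul hg, pd_one_sin]
  simp

theorem selfInteraction_eq (hg : Differentiable ℝ g) (hlt : 0 < lt) (hNt : 0 < Nt) (x : Plane) :
    selfInteraction s K lt Nt g x
      = K⁻¹ ^ 2 * lt ^ (3 - 2 * s) * Nt ^ (-(2 * s)) *
          (g (lt • x) * pd 1 g (lt • x) * cos (lt * Nt * x.1) * sin (lt * Nt * x.1)) := by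
  have hgrad : (grad (omegaP s K lt Nt g) x).2 = pd 1 (omegaP s K lt Nt g) x := by simp [grad, pd]
  rw [selfInteraction, dot, hgrad, pd_one_omegaP hg, show 3 - 2 * s = (1 - s) + (1 - s) + 1 by ring,
    show -(2 * s) = -s + -s by ring, Real.rpow_add hlt, Real.rpow_add hlt, Real.rpow_one,
    Real.rpow_add hNt]
  simp [vBarP]
  ring

theorem selfInteraction_eq_mul (hg : Differentiable ℝ g) (hlt : 0 < lt) (hNt : 0 < Nt) :
    selfInteraction s K lt Nt g
      = (fun x => K⁻¹ ^ 2 * lt ^ (3 - 2 * s) * Nt ^ (-(2 * s)) / 2 * (g * pd 1 g) (lt • x)) *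
          fun x => sin (2 * (lt * Nt) * x.1) := by
  ext x
  rw [selfInteraction_eq hg hlt hNt, Pi.mul_apply, Pi.mul_apply, mul_assoc 2, sin_two_mul]
  ring

theorem contDiff_selfInteraction (hg : ContDiff ℝ ∞ g) (hlt : 0 < lt) (hNt : 0 < Nt) :
    ContDiff ℝ ∞ (selfInteraction s K lt Nt g) := by
  rw [selfInteraction_eq_mul (hg.differentiable (by simp)) hlt hNt]
  simp only [Pi.mul_def]
  fun_prop

theorem derivBound_selfInteraction (hg : ContDiff ℝ ∞ g) (hgc : HasCompactSupport g)
    (hlt : 1 < lt) (hNt : 1 < Nt) (k : ℕ) :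
    DerivBound (k + 1) (K⁻¹ ^ 2 * lt ^ (3 - 2 * s) * Nt ^ (-(2 * s)) / 2 * cknorm (k + 2) g ^ 2)
      (4 * (lt * Nt)) (selfInteraction s K lt Nt g) := by
  have hg' := derivBound_cknorm hg hgc (k + 2)
  have hprod := (hg'.of_le (by omega)).mul hg (contDiff_pd hg 1) (hg'.pd 1)
  have hB : 0 ≤ K⁻¹ ^ 2 * lt ^ (3 - 2 * s) * Nt ^ (-(2 * s)) / 2 := by positivity
  rw [selfInteraction_eq_mul (hg.differentiable (by simp)) (by linarith) (by linarith)]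
  refine ((hprod.const_mul_comp_smul (hg.mul (contDiff_pd hg 1)) _ lt).mul
    (by fun_prop) (by fun_prop) (derivBound_sin _ _)).mono
    (le_of_eq (by rw [abs_of_nonneg hB]; ring)) (by positivity) ?_
  rw [abs_of_pos (by linarith), abs_of_pos (by positivity)]
  nlinarith

end Perturbation

/-- **Self-interaction of the perturbation pseudosolution**: the exact pointwise
identity for `v̄[ω_p]·∇ω_p` and the resulting `C^{k,α}` bounds. -/
theorem pseudo_selfinteraction_perturbation (k : ℕ) (α : ℝ) (hα : α ∈ Set.Ico (0:ℝ) 1) :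
    ∃ C : ℝ, 0 < C ∧
    ∀ (s K lt Nt : ℝ), s ∈ Set.Ioo (3/2 : ℝ) 2 → 1 ≤ K → 1 < lt → 1 < Nt →
    ∀ g : Plane → ℝ, ContDiff ℝ (⊤ : ℕ∞) g → HasCompactSupport g →
      (∀ x : Plane,
        dot (vBarP s K lt Nt g x) (grad (omegaP s K lt Nt g) x)
          = K⁻¹ ^ 2 * lt ^ (3 - 2*s) * Nt ^ (-(2*s)) *
              (g (lt • x) * pd 1 g (lt • x) *
                Real.cos (lt * Nt * x.1) * Real.sin (lt * Nt * x.1))) ∧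
      ckanorm k α (fun x => dot (vBarP s K lt Nt g x) (grad (omegaP s K lt Nt g) x))
        ≤ C * cknorm (k + 2) g ^ 2 * K⁻¹ ^ 2 *
          lt ^ ((k : ℝ) + α + 3 - 2*s) * Nt ^ ((k : ℝ) + α - 2*s) := by
  obtain ⟨hα0, hα1⟩ := hα
  refine ⟨(k + 1) * (k + 3) * 4 ^ (k + 1) / 2, by positivity, fun s K lt Nt _ _ hlt hNt g hg hgc => ?_⟩
  have hlt0 : 0 < lt := by linarith
  have hNt0 : 0 < Nt := by linarith
  refine ⟨selfInteraction_eq (hg.differentiable (by simp)) hlt0 hNt0, ?_⟩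
  have hscale : lt ^ (3 - 2 * s) * Nt ^ (-(2 * s)) * (lt * Nt) ^ ((k : ℝ) + α)
      = lt ^ ((k : ℝ) + α + 3 - 2 * s) * Nt ^ ((k : ℝ) + α - 2 * s) := by
    rw [Real.mul_rpow hlt0.le hNt0.le, show (k : ℝ) + α + 3 - 2 * s = 3 - 2 * s + (k + α) by ring,
      show (k : ℝ) + α - 2 * s = -(2 * s) + (k + α) by ring, Real.rpow_add hlt0 (3 - 2 * s),
      Real.rpow_add hNt0 (-(2 * s))]
    ring
  have h4 : (4 : ℝ) ^ ((k : ℝ) + α) ≤ 4 ^ (k + 1) := by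
    rw [← Real.rpow_natCast]
    exact Real.rpow_le_rpow_of_exponent_le (by norm_num) (by push_cast; linarith)
  calc ckanorm k α (selfInteraction s K lt Nt g)
      ≤ (k + 1) * (k + 3) * (K⁻¹ ^ 2 * lt ^ (3 - 2 * s) * Nt ^ (-(2 * s)) / 2 * cknorm (k + 2) g ^ 2)
          * (4 * (lt * Nt)) ^ ((k : ℝ) + α) :=
        ckanorm_le_of_derivBound (contDiff_selfInteraction hg hlt0 hNt0)
          (derivBound_selfInteraction hg hgc hlt hNt k) (by nlinarith) hα0 hα1.le
    _ = (k + 1) * (k + 3) * 4 ^ ((k : ℝ) + α) / 2 * cknorm (k + 2) g ^ 2 * K⁻¹ ^ 2 *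
          lt ^ ((k : ℝ) + α + 3 - 2 * s) * Nt ^ ((k : ℝ) + α - 2 * s) := by
        rw [Real.mul_rpow (by norm_num) (by positivity)]
        linear_combination
          ((k + 1) * (k + 3) * 4 ^ ((k : ℝ) + α) / 2 * cknorm (k + 2) g ^ 2 * K⁻¹ ^ 2) * hscale
    _ ≤ _ := by gcongr

end SQG
end
end
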